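/- Let p be a prime with p ≡ 1 (mod 4). Then Σ_{k=0}^{p-1} (k/3) · C(2k,k)² / (-16)^k ≡ 0 (mod p²), where (k/3) is the Legendre symbol modulo 3. -/

import Mathlib

open Finset Nat

/-! ## Auxiliary ring `ℤ[ω]` with `ω² + ω + 1 = 0` -/

@[ext]
structure Eis where
  re : ℤ
  im : ℤ

namespace Eis

instance : Zero Eis := ⟨⟨0, 0⟩⟩
instance : One Eis := ⟨⟨1, 0⟩⟩
instance : Add Eis := ⟨fun z w => ⟨z.re + w.re, z.im + w.im⟩⟩
instance : Neg Eis := ⟨fun z => ⟨-z.re, -z.im⟩⟩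
instance : Mul Eis :=
  ⟨fun z w => ⟨z.re * w.re - z.im * w.im, z.re * w.im + z.im * w.re - z.im * w.im⟩⟩

@[simp] theorem zero_re : (0 : Eis).re = 0 := rfl
@[simp] theorem zero_im : (0 : Eis).im = 0 := rfl
@[simp] theorem one_re : (1 : Eis).re = 1 := rfl
@[simp] theorem one_im : (1 : Eis).im = 0 := rfl
@[simp] theorem add_re (z w : Eis) : (z + w).re = z.re + w.re := rfl
@[simp] theorem add_im (z w : Eis) : (z + w).im = z.im + w.im := rfl
@[simp] theorem neg_re (z : Eis) : (-z).re = -z.re := rfl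
@[simp] theorem neg_im (z : Eis) : (-z).im = -z.im := rfl
@[simp] theorem mul_re (z w : Eis) : (z * w).re = z.re * w.re - z.im * w.im := rfl
@[simp] theorem mul_im (z w : Eis) :
    (z * w).im = z.re * w.im + z.im * w.re - z.im * w.im := rfl

instance addCommGroup : AddCommGroup Eis := by
  refine
  { add := (· + ·)
    zero := (0 : Eis)
    sub := fun a b => a + -b
    neg := Neg.neg
    nsmul := @nsmulRec Eis ⟨0⟩ ⟨(· + ·)⟩
    zsmul := @zsmulRec Eis ⟨0⟩ ⟨(· + ·)⟩ ⟨Neg.neg⟩ (@nsmulRec Eis ⟨0⟩ ⟨(· + ·)⟩)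
    add_assoc := ?_
    zero_add := ?_
    add_zero := ?_
    neg_add_cancel := ?_
    add_comm := ?_ } <;>
  intros <;>
  ext <;>
  simp [add_comm, add_left_comm]

@[simp] theorem sub_re (z w : Eis) : (z - w).re = z.re - w.re := rfl
@[simp] theorem sub_im (z w : Eis) : (z - w).im = z.im - w.im := rfl

/-- Cast of an integer. -/
def ofInt (n : ℤ) : Eis := ⟨n, 0⟩

instance addGroupWithOne : AddGroupWithOne Eis :=
  { Eis.addCommGroup with
    natCast := fun n => ofInt n
    intCast := ofInt
    one := 1 }

instance commRing : CommRing Eis := by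
  refine
  { Eis.addGroupWithOne with
    mul := (· * ·)
    npow := @npowRec Eis ⟨1⟩ ⟨(· * ·)⟩,
    add_comm := ?_
    left_distrib := ?_
    right_distrib := ?_
    zero_mul := ?_
    mul_zero := ?_
    mul_assoc := ?_
    one_mul := ?_
    mul_one := ?_
    mul_comm := ?_ } <;>
  intros <;>
  ext <;>
  simp <;>
  ring

@[simp] theorem intCast_re (n : ℤ) : (n : Eis).re = n := rfl
@[simp] theorem intCast_im (n : ℤ) : (n : Eis).im = 0 := rfl
@[simp] theorem natCast_re (n : ℕ) : (n : Eis).re = n := rfl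
@[simp] theorem natCast_im (n : ℕ) : (n : Eis).im = 0 := rfl

/-- The cube root of unity `ω`. -/
def w : Eis := ⟨0, 1⟩

@[simp] theorem w_re : w.re = 0 := rfl
@[simp] theorem w_im : w.im = 1 := rfl

theorem w_sq : w ^ 2 = ⟨-1, -1⟩ := by
  have : w ^ 2 = w * w := by ring
  rw [this]; ext <;> simp [w]

theorem w_cube : w ^ 3 = 1 := by
  have h : w ^ 3 = w ^ 2 * w := by ring
  rw [h, w_sq]; ext <;> simp [w]

theorem one_add_w : (1 : Eis) + w = -(w ^ 2) := by
  rw [w_sq]; ext <;> simp [w]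

theorem one_add_w_sq : (1 : Eis) + w ^ 2 = -w := by
  rw [w_sq]; ext <;> simp [w]

theorem w_pow_mod (k : ℕ) : w ^ k = w ^ (k % 3) := by
  conv_lhs => rw [← Nat.div_add_mod k 3]
  rw [pow_add, pow_mul, w_cube, one_pow, one_mul]

end Eis

/-! ## The Legendre symbol mod 3 as an integer -/

def chi3 (k : ℕ) : ℤ := if k % 3 = 1 then 1 else if k % 3 = 2 then -1 else 0

theorem Eis.w_pow_sub (k : ℕ) :
    Eis.w ^ k - (Eis.w ^ 2) ^ k = (chi3 k : Eis) * (Eis.w - Eis.w ^ 2) := by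
  have h2 : (Eis.w ^ 2) ^ k = (Eis.w ^ k) ^ 2 := by
    rw [← pow_mul, ← pow_mul, Nat.mul_comm]
  rw [h2, Eis.w_pow_mod k]
  have h4 : (Eis.w ^ 2) ^ 2 = Eis.w := by
    rw [show (Eis.w ^ 2) ^ 2 = Eis.w ^ 3 * Eis.w by ring, Eis.w_cube, one_mul]
  rcases (by omega : k % 3 = 0 ∨ k % 3 = 1 ∨ k % 3 = 2) with h | h | h
  · simp only [chi3, h]; norm_num
  · simp only [chi3, h]; norm_num
  · simp only [chi3, h]; norm_num
    rw [h4]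

/-! ## Binomial identities over ℕ -/

/-- Subset-of-subset identity. -/
theorem choose_sub_identity {n m k : ℕ} (hkm : k ≤ m) (hmn : m ≤ n) :
    n.choose k * (n - k).choose (m - k) = n.choose m * m.choose k := by
  have hF : 0 < k ! * (m - k)! * (n - m)! := by positivity
  apply Nat.eq_of_mul_eq_mul_right hF
  have e1 : (n - k).choose (m - k) * (m - k)! * (n - m)! = (n - k)! := by
    have h := Nat.choose_mul_factorial_mul_factorial (show m - k ≤ n - k by omega)
    rwa [show n - k - (m - k) = n - m by omega] at h
  have e3 : n.choose k * k ! * (n - k)! = n ! :=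
    Nat.choose_mul_factorial_mul_factorial (by omega)
  have e4 : m.choose k * k ! * (m - k)! = m ! :=
    Nat.choose_mul_factorial_mul_factorial hkm
  have e5 : n.choose m * m ! * (n - m)! = n ! :=
    Nat.choose_mul_factorial_mul_factorial hmn
  calc n.choose k * (n - k).choose (m - k) * (k ! * (m - k)! * (n - m)!)
      = (n.choose k * k !) * ((n - k).choose (m - k) * (m - k)! * (n - m)!) := by ring
    _ = n.choose k * k ! * (n - k)! := by rw [e1]
    _ = n ! := e3
    _ = n.choose m * m ! * (n - m)! := e5.symm
    _ = n.choose m * (m.choose k * k ! * (m - k)!) * (n - m)! := by rw [e4]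
    _ = n.choose m * m.choose k * (k ! * (m - k)! * (n - m)!) := by ring

/-- Vandermonde-type identity. -/
theorem sum_choose_mul_choose (n m : ℕ) :
    ∑ k ∈ range (m + 1), m.choose k * n.choose k = (n + m).choose m := by
  have h : (m + n).choose m = ∑ i ∈ range (m + 1), m.choose i * n.choose (m - i) := by
    rw [Nat.add_choose_eq, Finset.Nat.sum_antidiagonal_eq_sum_range_succ
      (fun a b => m.choose a * n.choose b)]
  have h2 := Finset.sum_range_reflect (fun i => m.choose i * n.choose (m - i)) (m + 1)
  have h3 : ∀ j ∈ range (m + 1),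
      m.choose (m + 1 - 1 - j) * n.choose (m - (m + 1 - 1 - j)) = m.choose j * n.choose j := by
    intro j hj
    have hj' : j ≤ m := Nat.lt_succ_iff.mp (mem_range.mp hj)
    rw [show m + 1 - 1 - j = m - j by omega, Nat.choose_symm hj',
      show m - (m - j) = j by omega]
  rw [sum_congr rfl h3] at h2
  rw [h2, ← h, Nat.add_comm]

/-- Inner coefficient identity. -/
theorem inner_choose_sum {n m : ℕ} (hmn : m ≤ n) :
    ∑ k ∈ range (m + 1), n.choose k ^ 2 * (n - k).choose (m - k)
      = n.choose m * (n + m).choose m := by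
  have h : ∀ k ∈ range (m + 1),
      n.choose k ^ 2 * (n - k).choose (m - k) = n.choose m * (m.choose k * n.choose k) := by
    intro k hk
    have hkm : k ≤ m := Nat.lt_succ_iff.mp (mem_range.mp hk)
    have := choose_sub_identity hkm hmn
    calc n.choose k ^ 2 * (n - k).choose (m - k)
        = n.choose k * (n.choose k * (n - k).choose (m - k)) := by ring
      _ = n.choose k * (n.choose m * m.choose k) := by rw [this]
      _ = n.choose m * (m.choose k * n.choose k) := by ring
  rw [sum_congr rfl h, ← Finset.mul_sum, sum_choose_mul_choose]

/-! ## The key polynomial identity (Legendre polynomial forms) -/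

theorem legendre_sum_eq {A : Type*} [CommRing A] (n : ℕ) (z : A) :
    ∑ k ∈ range (n + 1), ((n.choose k * (n + k).choose k : ℕ) : A) * z ^ k
      = ∑ k ∈ range (n + 1), ((n.choose k ^ 2 : ℕ) : A) * (z ^ k * (1 + z) ^ (n - k)) := by
  have step1 : ∀ k ∈ range (n + 1),
      ((n.choose k ^ 2 : ℕ) : A) * (z ^ k * (1 + z) ^ (n - k))
        = ∑ j ∈ range (n + 1 - k),
            ((n.choose k ^ 2 * (n - k).choose j : ℕ) : A) * z ^ (k + j) := by
    intro k hk
    have hk' : k ≤ n := Nat.lt_succ_iff.mp (mem_range.mp hk)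
    rw [add_comm (1 : A) z, add_pow, show n + 1 - k = n - k + 1 by omega]
    rw [Finset.mul_sum, Finset.mul_sum]
    apply sum_congr rfl
    intro j hj
    push_cast
    rw [pow_add]
    ring
  rw [sum_congr rfl step1,
    ← Finset.sum_range_diag_flip (n + 1)
      (fun k j => ((n.choose k ^ 2 * (n - k).choose j : ℕ) : A) * z ^ (k + j))]
  apply sum_congr rfl
  intro m hm
  have hm' : m ≤ n := Nat.lt_succ_iff.mp (mem_range.mp hm)
  have e : ∀ k ∈ range (m + 1),
      ((n.choose k ^ 2 * (n - k).choose (m - k) : ℕ) : A) * z ^ (k + (m - k))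
        = ((n.choose k ^ 2 * (n - k).choose (m - k) : ℕ) : A) * z ^ m := by
    intro k hk
    have hkm : k ≤ m := Nat.lt_succ_iff.mp (mem_range.mp hk)
    rw [show k + (m - k) = m by omega]
  rw [sum_congr rfl e, ← Finset.sum_mul, ← Nat.cast_sum, inner_choose_sum hm']

/-! ## The main integer identity: `∑ χ(k) C(n,k) C(n+k,k) = 0` for even `n` -/

theorem neg_one_pow_sub_eq {n k : ℕ} (hn : n % 2 = 0) (hk : k ≤ n) :
    (-1 : Eis) ^ (n - k) = (-1 : Eis) ^ k := by
  have h1 : (-1 : Eis) ^ (n - k) * (-1) ^ k = 1 := by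
    rw [← pow_add, show n - k + k = n by omega]
    exact Even.neg_one_pow (Nat.even_iff.mpr hn)
  have h2 : (-1 : Eis) ^ k * (-1) ^ k = 1 := by
    rw [← pow_add]
    exact Even.neg_one_pow ⟨k, rfl⟩
  calc (-1 : Eis) ^ (n - k) = (-1 : Eis) ^ (n - k) * ((-1) ^ k * (-1) ^ k) := by
        rw [h2, mul_one]
    _ = ((-1 : Eis) ^ (n - k) * (-1) ^ k) * (-1) ^ k := by ring
    _ = (-1 : Eis) ^ k := by rw [h1, one_mul]

theorem chi_sum_eq_zero (n : ℕ) (hn : n % 2 = 0) :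
    ∑ k ∈ range (n + 1), chi3 k * (n.choose k * (n + k).choose k : ℤ) = 0 := by
  set c : ℕ → Eis := fun k => ((n.choose k * (n + k).choose k : ℕ) : Eis) with hc
  -- evaluation at ω
  have h1 : ∑ k ∈ range (n + 1), c k * Eis.w ^ k
      = ∑ k ∈ range (n + 1),
          (-1 : Eis) ^ k * ((n.choose k ^ 2 : ℕ) : Eis) * Eis.w ^ (n + k) := by
    rw [hc]
    rw [legendre_sum_eq n Eis.w]
    have e : ∀ k ∈ range (n + 1),
        ((n.choose k ^ 2 : ℕ) : Eis) * (Eis.w ^ k * (1 + Eis.w) ^ (n - k))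
          = (-1 : Eis) ^ (n - k) * ((n.choose k ^ 2 : ℕ) : Eis) * Eis.w ^ (2 * n - k) := by
      intro k hk
      have hk' : k ≤ n := Nat.lt_succ_iff.mp (mem_range.mp hk)
      have hpow : Eis.w ^ k * (Eis.w ^ 2) ^ (n - k) = Eis.w ^ (2 * n - k) := by
        rw [← pow_mul, ← pow_add, show k + 2 * (n - k) = 2 * n - k by omega]
      calc ((n.choose k ^ 2 : ℕ) : Eis) * (Eis.w ^ k * (1 + Eis.w) ^ (n - k))
          = ((n.choose k ^ 2 : ℕ) : Eis) * (Eis.w ^ k * (-(Eis.w ^ 2)) ^ (n - k)) := by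
            rw [Eis.one_add_w]
        _ = (-1 : Eis) ^ (n - k) * ((n.choose k ^ 2 : ℕ) : Eis)
            * (Eis.w ^ k * (Eis.w ^ 2) ^ (n - k)) := by rw [neg_pow]; ring
        _ = (-1 : Eis) ^ (n - k) * ((n.choose k ^ 2 : ℕ) : Eis) * Eis.w ^ (2 * n - k) := by
            rw [hpow]
    rw [sum_congr rfl e]
    rw [← Finset.sum_range_reflect
      (fun k => (-1 : Eis) ^ (n - k) * ((n.choose k ^ 2 : ℕ) : Eis) * Eis.w ^ (2 * n - k))
      (n + 1)]
    apply sum_congr rfl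
    intro j hj
    have hj' : j ≤ n := Nat.lt_succ_iff.mp (mem_range.mp hj)
    rw [show n + 1 - 1 - j = n - j by omega, show n - (n - j) = j by omega,
      show 2 * n - (n - j) = n + j by omega, Nat.choose_symm hj']
  -- evaluation at ω²
  have h2 : ∑ k ∈ range (n + 1), c k * (Eis.w ^ 2) ^ k
      = ∑ k ∈ range (n + 1),
          (-1 : Eis) ^ k * ((n.choose k ^ 2 : ℕ) : Eis) * Eis.w ^ (n + k) := by
    rw [hc]
    rw [legendre_sum_eq n (Eis.w ^ 2)]
    apply sum_congr rfl
    intro k hk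
    have hk' : k ≤ n := Nat.lt_succ_iff.mp (mem_range.mp hk)
    have hpow : (Eis.w ^ 2) ^ k * Eis.w ^ (n - k) = Eis.w ^ (n + k) := by
      rw [← pow_mul, ← pow_add, show 2 * k + (n - k) = n + k by omega]
    calc ((n.choose k ^ 2 : ℕ) : Eis) * ((Eis.w ^ 2) ^ k * (1 + Eis.w ^ 2) ^ (n - k))
        = ((n.choose k ^ 2 : ℕ) : Eis) * ((Eis.w ^ 2) ^ k * (-Eis.w) ^ (n - k)) := by
          rw [Eis.one_add_w_sq]
      _ = (-1 : Eis) ^ (n - k) * ((n.choose k ^ 2 : ℕ) : Eis)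
          * ((Eis.w ^ 2) ^ k * Eis.w ^ (n - k)) := by rw [neg_pow]; ring
      _ = (-1 : Eis) ^ (n - k) * ((n.choose k ^ 2 : ℕ) : Eis) * Eis.w ^ (n + k) := by rw [hpow]
      _ = (-1 : Eis) ^ k * ((n.choose k ^ 2 : ℕ) : Eis) * Eis.w ^ (n + k) := by
          rw [neg_one_pow_sub_eq hn hk']
  -- conclude
  have hzero : ∑ k ∈ range (n + 1), c k * (Eis.w ^ k - (Eis.w ^ 2) ^ k) = 0 := by
    rw [show (∑ k ∈ range (n + 1), c k * (Eis.w ^ k - (Eis.w ^ 2) ^ k))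
        = (∑ k ∈ range (n + 1), c k * Eis.w ^ k)
          - ∑ k ∈ range (n + 1), c k * (Eis.w ^ 2) ^ k by
      rw [← Finset.sum_sub_distrib]; apply sum_congr rfl; intros; ring]
    rw [h1, h2, sub_self]
  have hfac : ∀ k ∈ range (n + 1),
      c k * (Eis.w ^ k - (Eis.w ^ 2) ^ k)
        = ((chi3 k * (n.choose k * (n + k).choose k : ℤ) : ℤ) : Eis) * (Eis.w - Eis.w ^ 2) := by
    intro k _
    rw [Eis.w_pow_sub, hc]
    push_cast
    ring
  rw [sum_congr rfl hfac, ← Finset.sum_mul, ← Int.cast_sum] at hzero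
  set D : ℤ := ∑ k ∈ range (n + 1), chi3 k * (n.choose k * (n + k).choose k : ℤ) with hD
  have hww : Eis.w - Eis.w ^ 2 = ⟨1, 2⟩ := by
    rw [Eis.w_sq]; ext <;> simp [Eis.w]
  rw [hww] at hzero
  have hre := congrArg Eis.re hzero
  simpa using hre

/-! ## Factorial / central binomial identities -/

theorem fact_two_mul (k : ℕ) :
    (2 * k)! = 2 ^ k * k ! * ∏ j ∈ range k, (2 * j + 1) := by
  induction k with
  | zero => simp
  | succ k ih =>
    rw [show 2 * (k + 1) = (2 * k + 1) + 1 by ring, Nat.factorial_succ, Nat.factorial_succ,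
      ih, prod_range_succ, Nat.factorial_succ]
    ring

theorem choose_two_mul_mul_fact (k : ℕ) :
    (2 * k).choose k * k ! = 2 ^ k * ∏ j ∈ range k, (2 * j + 1) := by
  apply Nat.eq_of_mul_eq_mul_right (Nat.factorial_pos k)
  have h := Nat.choose_mul_factorial_mul_factorial (show k ≤ 2 * k by omega)
  rw [show 2 * k - k = k by omega] at h
  calc (2 * k).choose k * k ! * k ! = (2 * k)! := h
    _ = 2 ^ k * k ! * ∏ j ∈ range k, (2 * j + 1) := fact_two_mul k
    _ = 2 ^ k * (∏ j ∈ range k, (2 * j + 1)) * k ! := by ring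

theorem desc_minus {p n : ℕ} (hp2n : (p : ℤ) = 2 * n + 1) :
    ∀ k ≤ n, (n.choose k : ℤ) * k ! * 2 ^ k = ∏ j ∈ range k, ((p : ℤ) - (2 * j + 1)) := by
  intro k
  induction k with
  | zero => simp
  | succ k ih =>
    intro hk1
    have hk' : k ≤ n := by omega
    rw [prod_range_succ, ← ih hk']
    have hcs : (n.choose (k + 1) : ℤ) * (k + 1) = (n.choose k : ℤ) * ((n : ℤ) - k) := by
      have h : ((n.choose (k + 1) * (k + 1) : ℕ) : ℤ) = ((n.choose k * (n - k) : ℕ) : ℤ) :=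
        congrArg _ (Nat.choose_succ_right_eq n k)
      push_cast [Nat.cast_sub hk'] at h
      linarith
    calc (n.choose (k + 1) : ℤ) * (k + 1)! * 2 ^ (k + 1)
        = ((n.choose (k + 1) : ℤ) * (k + 1)) * (k ! * (2 * 2 ^ k)) := by
          push_cast [Nat.factorial_succ]; ring
      _ = ((n.choose k : ℤ) * ((n : ℤ) - k)) * (k ! * (2 * 2 ^ k)) := by rw [hcs]
      _ = ((n.choose k : ℤ) * k ! * 2 ^ k) * ((p : ℤ) - (2 * k + 1)) := by
          rw [hp2n]; ring

theorem desc_plus {p n : ℕ} (hp2n : (p : ℤ) = 2 * n + 1) :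
    ∀ k : ℕ, ((n + k).choose k : ℤ) * k ! * 2 ^ k = ∏ j ∈ range k, ((p : ℤ) + (2 * j + 1)) := by
  intro k
  induction k with
  | zero => simp
  | succ k ih =>
    rw [prod_range_succ, ← ih]
    have hcs : ((n + (k + 1)).choose (k + 1) : ℤ) * (k + 1)
        = ((n + k).choose k : ℤ) * ((n : ℤ) + k + 1) := by
      have h : ((Nat.succ (n + k) * (n + k).choose k : ℕ) : ℤ)
          = (((n + k + 1).choose (k + 1) * (k + 1) : ℕ) : ℤ) :=
        congrArg _ (Nat.add_one_mul_choose_eq (n + k) k)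
      rw [show n + (k + 1) = (n + k) + 1 by ring]
      push_cast at h ⊢
      linarith
    calc ((n + (k + 1)).choose (k + 1) : ℤ) * (k + 1)! * 2 ^ (k + 1)
        = (((n + (k + 1)).choose (k + 1) : ℤ) * (k + 1)) * (k ! * (2 * 2 ^ k)) := by
          push_cast [Nat.factorial_succ]; ring
      _ = (((n + k).choose k : ℤ) * ((n : ℤ) + k + 1)) * (k ! * (2 * 2 ^ k)) := by rw [hcs]
      _ = (((n + k).choose k : ℤ) * k ! * 2 ^ k) * ((p : ℤ) + (2 * k + 1)) := by
          rw [hp2n]; ring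

/-! ## Main theorem -/

theorem stmt7 (p : ℕ) (hp : p.Prime) (h4 : p % 4 = 1) :
    (∑ k ∈ Finset.range p,
      (if k % 3 = 1 then (1 : ZMod (p ^ 2)) else if k % 3 = 2 then -1 else 0) *
        (Nat.choose (2 * k) k : ZMod (p ^ 2)) ^ 2 * (((-16 : ZMod (p ^ 2))) ^ k)⁻¹) = 0 := by
  have hp5 : 5 ≤ p := by
    have h2 := hp.two_le
    omega
  set n : ℕ := p / 2 with hn
  have hpodd : p % 2 = 1 := by omega
  have h2n : 2 * n + 1 = p := by omega
  have hneven : n % 2 = 0 := by omega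
  have hnp : n + 1 ≤ p := by omega
  have hp2n : (p : ℤ) = 2 * (n : ℤ) + 1 := by exact_mod_cast congrArg (Nat.cast (R := ℤ)) h2n.symm
  haveI : NeZero (p ^ 2) := ⟨by positivity⟩
  have hp0 : ((p : ZMod (p ^ 2))) ^ 2 = 0 := by
    rw [← Nat.cast_pow]
    exact ZMod.natCast_self _
  -- units
  have hu2 : IsUnit (2 : ZMod (p ^ 2)) := by
    rw [show (2 : ZMod (p ^ 2)) = ((2 : ℕ) : ZMod (p ^ 2)) by norm_cast,
      ZMod.isUnit_iff_coprime]
    exact Nat.Coprime.pow_right _ (Nat.coprime_two_left.mpr (Nat.odd_iff.mpr hpodd))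
  have hu16 : IsUnit (-16 : ZMod (p ^ 2)) := by
    have h : (-16 : ZMod (p ^ 2)) = -(2 ^ 4) := by norm_num
    rw [h]
    exact (hu2.pow 4).neg
  have hufact : ∀ k ≤ n, IsUnit ((k ! : ℕ) : ZMod (p ^ 2)) := by
    intro k hk
    rw [ZMod.isUnit_iff_coprime]
    apply Nat.Coprime.pow_right
    rcases Nat.coprime_or_dvd_of_prime hp (k !) with h | h
    · exact h.symm
    · exact absurd ((Nat.Prime.dvd_factorial hp).mp h) (by omega)
  -- the key bridge: for k ≤ n the term equals χ(k) C(n,k) C(n+k,k)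
  have bridge : ∀ k ≤ n,
      ((2 * k).choose k : ZMod (p ^ 2)) ^ 2 * (((-16 : ZMod (p ^ 2))) ^ k)⁻¹
        = ((n.choose k * (n + k).choose k : ℕ) : ZMod (p ^ 2)) := by
    intro k hk
    set R := ZMod (p ^ 2)
    set P : R := ((∏ j ∈ range k, (2 * j + 1) : ℕ) : R) with hP
    -- identity E1
    have hint : ((n.choose k : ℤ) * k ! * 2 ^ k) * (((n + k).choose k : ℤ) * k ! * 2 ^ k)
        = ∏ j ∈ range k, (((p : ℤ)) ^ 2 - (2 * j + 1) ^ 2) := by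
      rw [desc_minus hp2n k hk, desc_plus hp2n k, ← Finset.prod_mul_distrib]
      apply prod_congr rfl
      intros
      ring
    have E1 : ((n.choose k : R) * k ! * 2 ^ k) * (((n + k).choose k : R) * k ! * 2 ^ k)
        = (-1 : R) ^ k * P ^ 2 := by
      have := congrArg (fun x : ℤ => (x : R)) hint
      push_cast [R] at this
      rw [this]
      have e : ∀ j ∈ range k, ((p : R)) ^ 2 - ((2 * j : R) + 1) ^ 2
          = (-1) * ((2 * j : R) + 1) ^ 2 := by
        intro j _
        rw [hp0]
        ring
      rw [prod_congr rfl e, Finset.prod_mul_distrib, prod_const, card_range, hP]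
      push_cast [R]
      rw [← Finset.prod_pow]
    have E2 : ((2 * k).choose k : R) * (k ! : R) = 2 ^ k * P := by
      have := congrArg (fun x : ℕ => (x : R)) (choose_two_mul_mul_fact k)
      push_cast [R] at this
      rw [hP]
      push_cast [R]
      exact this
    -- combine
    have key : (((n.choose k * (n + k).choose k : ℕ) : R) * (-16) ^ k)
          * ((k ! : R) * (k ! : R) * (2 ^ k * 2 ^ k))
        = (((2 * k).choose k : R) ^ 2) * ((k ! : R) * (k ! : R) * (2 ^ k * 2 ^ k)) := by
      have c1 : (((n.choose k * (n + k).choose k : ℕ) : R) * (-16) ^ k)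
            * ((k ! : R) * (k ! : R) * (2 ^ k * 2 ^ k))
          = (((n.choose k : R) * k ! * 2 ^ k) * (((n + k).choose k : R) * k ! * 2 ^ k))
            * (-16) ^ k := by
        push_cast [R]
        ring
      rw [c1, E1]
      have e16 : ((-1 : R)) ^ k * (-16) ^ k = ((2 : R) ^ k) ^ 4 := by
        rw [← mul_pow, show ((-1) * (-16) : R) = 2 ^ 4 by norm_num, pow_right_comm]
      have c2 : (-1 : R) ^ k * P ^ 2 * (-16) ^ k = P ^ 2 * ((2 : R) ^ k) ^ 4 := by
        calc (-1 : R) ^ k * P ^ 2 * (-16) ^ k = P ^ 2 * ((-1 : R) ^ k * (-16) ^ k) := by ring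
          _ = P ^ 2 * ((2 : R) ^ k) ^ 4 := by rw [e16]
      rw [c2]
      have c3 : (P ^ 2 : R) * ((2 : R) ^ k) ^ 4 = (2 ^ k * P) ^ 2 * (2 ^ k * 2 ^ k) := by
        ring
      rw [c3, ← E2]
      ring
    have huu : IsUnit ((k ! : R) * (k ! : R) * ((2 : R) ^ k * 2 ^ k)) :=
      ((hufact k hk).mul (hufact k hk)).mul ((hu2.pow k).mul (hu2.pow k))
    have key2 : ((n.choose k * (n + k).choose k : ℕ) : R) * (-16) ^ k
        = ((2 * k).choose k : R) ^ 2 := huu.mul_right_cancel key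
    calc ((2 * k).choose k : R) ^ 2 * (((-16 : R)) ^ k)⁻¹
        = ((n.choose k * (n + k).choose k : ℕ) : R) * ((-16) ^ k * (((-16 : R)) ^ k)⁻¹) := by
          rw [← key2]; ring
      _ = ((n.choose k * (n + k).choose k : ℕ) : R) := by
          rw [ZMod.mul_inv_of_unit _ (hu16.pow k), mul_one]
  -- split the sum
  rw [← Finset.sum_range_add_sum_Ico _ hnp]
  have hupper : ∑ k ∈ Ico (n + 1) p,
      (if k % 3 = 1 then (1 : ZMod (p ^ 2)) else if k % 3 = 2 then -1 else 0) *
        (Nat.choose (2 * k) k : ZMod (p ^ 2)) ^ 2 * (((-16 : ZMod (p ^ 2))) ^ k)⁻¹ = 0 := by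
    apply Finset.sum_eq_zero
    intro k hk
    rw [mem_Ico] at hk
    obtain ⟨c, hc⟩ := hp.dvd_choose (show k < p by omega)
      (show 2 * k - k < p by omega) (show p ≤ 2 * k by omega)
    have hcast : ((2 * k).choose k : ZMod (p ^ 2)) = (p : ZMod (p ^ 2)) * (c : ZMod (p ^ 2)) := by
      rw [hc]
      push_cast
      ring
    rw [hcast, mul_pow, hp0, zero_mul, mul_zero, zero_mul]
  rw [hupper, add_zero]
  have hlower : ∀ k ∈ range (n + 1),
      (if k % 3 = 1 then (1 : ZMod (p ^ 2)) else if k % 3 = 2 then -1 else 0) *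
        (Nat.choose (2 * k) k : ZMod (p ^ 2)) ^ 2 * (((-16 : ZMod (p ^ 2))) ^ k)⁻¹
        = ((chi3 k * (n.choose k * (n + k).choose k : ℤ) : ℤ) : ZMod (p ^ 2)) := by
    intro k hk
    have hk' : k ≤ n := Nat.lt_succ_iff.mp (mem_range.mp hk)
    rw [mul_assoc, bridge k hk']
    unfold chi3
    have h3 : k % 3 = 0 ∨ k % 3 = 1 ∨ k % 3 = 2 := by omega
    rcases h3 with h | h | h <;> rw [h] <;> push_cast <;> norm_num
  rw [sum_congr rfl hlower, ← Int.cast_sum, chi_sum_eq_zero n hneven, Int.cast_zero]
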